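/- arXiv:2204.08228 — 4 statements merged into one kernel-verified Lean document; each statement's English description precedes it below -/
import Mathlib

section
/- For every natural number n ≥ 1, ∑_{k=1}^{n} (-1)^{k+1} cos²(kπ/(2n+2)) = 1/2. -/
/-! Halving the angle, `cos² x = 1/2 + cos (2x) / 2` splits the sum into `∑ (-1)^(k+1)` and
`∑ (-1)^(k+1) cos (kθ)` with `θ = π/(n+1)`. Multiplying the latter by `2 cos (θ/2)` makes it
telescope, and since `(n + 1/2) θ = π - θ/2` it equals `(1 + (-1)^n) / 2`; the two parity
terms cancel. -/

open Real Finset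

theorem two_mul_cos_half_mul_sum_neg_one_pow_mul_cos (θ : ℝ) (n : ℕ) :
    2 * cos (θ / 2) * ∑ k ∈ Icc 1 n, (-1 : ℝ) ^ (k + 1) * cos (k * θ) =
      cos (θ / 2) - (-1) ^ n * cos ((n + 1 / 2) * θ) := by
  induction n with
  | zero => simp [div_eq_inv_mul]
  | succ n ih =>
    have product_to_sum : 2 * cos (θ / 2) * cos ((n + 1 : ℕ) * θ) =
        cos ((n + 1 + 1 / 2) * θ) + cos ((n + 1 / 2) * θ) := by
      rw [cos_add_cos]; push_cast; ring_nf
    rw [sum_Icc_succ_top (by omega), mul_add, ih, mul_left_comm, product_to_sum]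
    push_cast
    ring

theorem sum_Icc_neg_one_pow_succ (n : ℕ) :
    ∑ k ∈ Icc 1 n, (-1 : ℝ) ^ (k + 1) = (1 - (-1) ^ n) / 2 := by
  have h := two_mul_cos_half_mul_sum_neg_one_pow_mul_cos 0 n
  simp only [zero_div, cos_zero, mul_zero, mul_one] at h
  linarith

theorem sum_Icc_neg_one_pow_succ_mul_cos_mul_pi_div (n : ℕ) (hn : 1 ≤ n) :
    ∑ k ∈ Icc 1 n, (-1 : ℝ) ^ (k + 1) * cos (k * (π / (n + 1))) = (1 + (-1) ^ n) / 2 := by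
  set θ := π / (n + 1)
  have two_le : (2 : ℝ) ≤ n + 1 := by exact_mod_cast Nat.succ_le_succ hn
  have θ_pos : 0 < θ := by positivity
  have θ_le : θ ≤ π / 2 := div_le_div_of_nonneg_left pi_pos.le two_pos two_le
  have cos_pos : 0 < cos (θ / 2) := cos_pos_of_mem_Ioo ⟨by linarith [pi_pos], by linarith [pi_pos]⟩
  have end_angle : ((n : ℝ) + 1 / 2) * θ = π - θ / 2 := by
    simp only [θ]; field_simp; ring
  have h := two_mul_cos_half_mul_sum_neg_one_pow_mul_cos θ n
  rw [end_angle, cos_pi_sub] at h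
  apply mul_left_cancel₀ (by positivity : 2 * cos (θ / 2) ≠ 0)
  rw [h]
  ring

theorem stmt4 (n : ℕ) (hn : 1 ≤ n) :
    ∑ k ∈ Finset.Icc 1 n,
      (-1 : ℝ) ^ (k + 1) * (Real.cos ((k : ℝ) * π / (2 * n + 2))) ^ 2 = 1 / 2 := by
  have double_angle (k : ℕ) : 2 * ((k : ℝ) * π / (2 * n + 2)) = k * (π / (n + 1)) := by
    field_simp
  simp_rw [cos_sq, double_angle]
  calc _ = (∑ k ∈ Icc 1 n, (-1 : ℝ) ^ (k + 1) +
          ∑ k ∈ Icc 1 n, (-1 : ℝ) ^ (k + 1) * cos (k * (π / (n + 1)))) / 2 := by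
        rw [← sum_add_distrib, sum_div]
        exact sum_congr rfl fun k _ => by ring
    _ = 1 / 2 := by
        rw [sum_Icc_neg_one_pow_succ, sum_Icc_neg_one_pow_succ_mul_cos_mul_pi_div n hn]
        ring
end

section
/- For every even natural number n ≥ 4, ∑_{k=1}^{n/2 - 1} 1/sin²(kπ/n) = (n² - 4)/6. -/
/-!
Put `ζ = exp (2πi/n)` and `S k = ∑_{j<n} j ζ^{jk}`. For `0 < k < n` the identity
`(ζ^k - 1) S k = n` and `|ζ^k - 1| = 2 |sin (kπ/n)|` give `1 / sin² (kπ/n) = 4 |S k|² / n²`.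
Parseval's identity for the discrete Fourier transform of `j ↦ j` gives
`∑_{k<n} |S k|² = n ∑_{j<n} j²`, and removing `|S 0|² = (∑_{j<n} j)²` yields
`∑_{k=1}^{n-1} 1 / sin² (kπ/n) = (n² - 1) / 3`. For `n = 2m` the terms at `k` and `n - k`
agree and the middle term is `1`, so the half sum is `((n² - 1) / 3 - 1) / 2`.
-/

open Real Finset ComplexConjugate

namespace IsPrimitiveRoot

variable {ζ : ℂ} {n : ℕ}

lemma geom_sum_pow_mul_conj_pow (hζ : IsPrimitiveRoot ζ n) {j l : ℕ} (hj : j < n) (hl : l < n) :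
    ∑ k ∈ range n, (ζ ^ j * conj (ζ ^ l)) ^ k = if j = l then (n : ℂ) else 0 := by
  have hconj : conj (ζ ^ l) = (ζ ^ l)⁻¹ :=
    (Complex.inv_eq_conj (by rw [norm_pow, hζ.norm'_eq_one (by omega), one_pow])).symm
  rw [hconj]
  split_ifs with hjl
  · subst hjl
    simp [pow_ne_zero _ (hζ.ne_zero (by omega))]
  · have hω1 : ζ ^ j * (ζ ^ l)⁻¹ ≠ 1 := fun h ↦
      hjl (hζ.pow_inj hj hl (mul_inv_eq_one₀ (pow_ne_zero _ (hζ.ne_zero (by omega))) |>.mp h))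
    have hωn : (ζ ^ j * (ζ ^ l)⁻¹) ^ n = 1 := by
      rw [mul_pow, inv_pow, ← pow_mul, ← pow_mul, pow_mul', pow_mul', hζ.pow_eq_one]
      simp
    rw [geom_sum_eq hω1, hωn, sub_self, zero_div]

lemma sum_norm_sq_sum_mul_pow (hζ : IsPrimitiveRoot ζ n) (a : ℕ → ℂ) :
    ∑ k ∈ range n, ‖∑ j ∈ range n, a j * (ζ ^ k) ^ j‖ ^ 2 = n * ∑ j ∈ range n, ‖a j‖ ^ 2 := by
  apply Complex.ofReal_injective
  push_cast
  simp_rw [← Complex.mul_conj']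
  calc ∑ k ∈ range n,
        (∑ j ∈ range n, a j * (ζ ^ k) ^ j) * conj (∑ l ∈ range n, a l * (ζ ^ k) ^ l)
      = ∑ k ∈ range n, ∑ j ∈ range n, ∑ l ∈ range n,
          a j * conj (a l) * (ζ ^ j * conj (ζ ^ l)) ^ k := by
        simp only [map_sum, map_mul, map_pow, sum_mul_sum]
        refine sum_congr rfl fun k _ ↦ sum_congr rfl fun j _ ↦ sum_congr rfl fun l _ ↦ ?_
        ring
    _ = ∑ j ∈ range n, ∑ l ∈ range n,
          a j * conj (a l) * ∑ k ∈ range n, (ζ ^ j * conj (ζ ^ l)) ^ k := by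
        rw [sum_comm]
        refine sum_congr rfl fun j _ ↦ ?_
        rw [sum_comm]
        simp only [mul_sum]
    _ = n * ∑ j ∈ range n, a j * conj (a j) := by
        rw [mul_sum]
        refine sum_congr rfl fun j hj ↦ ?_
        rw [sum_congr rfl fun l hl ↦ by
          rw [hζ.geom_sum_pow_mul_conj_pow (mem_range.mp hj) (mem_range.mp hl)]]
        simp [hj, mul_comm]

end IsPrimitiveRoot

lemma sub_one_mul_sum_range_mul_pow {R : Type*} [CommRing R] (ω : R) (n : ℕ) :
    (ω - 1) * ∑ j ∈ range n, (j : R) * ω ^ j = n * ω ^ n - ω * ∑ j ∈ range n, ω ^ j := by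
  induction n with
  | zero => simp
  | succ n ih =>
    rw [sum_range_succ, sum_range_succ, mul_add, ih]
    push_cast
    ring

lemma sub_one_mul_sum_range_mul_pow_of_pow_eq_one {K : Type*} [Field K] {ω : K} {n : ℕ}
    (hωn : ω ^ n = 1) (hω1 : ω ≠ 1) : (ω - 1) * ∑ j ∈ range n, (j : K) * ω ^ j = n := by
  rw [sub_one_mul_sum_range_mul_pow, hωn, geom_sum_eq hω1 n, hωn, sub_self, zero_div]
  ring

lemma norm_exp_two_pi_I_div_pow_sub_one (n k : ℕ) :
    ‖Complex.exp (2 * π * Complex.I / n) ^ k - 1‖ = 2 * |sin (k * π / n)| := by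
  have harg : Complex.exp (2 * π * Complex.I / n) ^ k
      = Complex.exp (Complex.I * ↑(2 * (k * π / n))) := by
    rw [← Complex.exp_nat_mul]
    push_cast
    ring_nf
  rw [harg, Complex.norm_exp_I_mul_ofReal_sub_one, norm_mul, Real.norm_two, Real.norm_eq_abs,
    mul_div_cancel_left₀ _ two_ne_zero]

lemma one_div_sin_sq_eq_norm_sq_sum {n k : ℕ} (hk : 0 < k) (hkn : k < n) :
    1 / sin (k * π / n) ^ 2
      = 4 / n ^ 2 *
        ‖∑ j ∈ range n, (j : ℂ) * (Complex.exp (2 * π * Complex.I / n) ^ k) ^ j‖ ^ 2 := by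
  have hζ := Complex.isPrimitiveRoot_exp n (by omega)
  have hkey := congrArg norm <| sub_one_mul_sum_range_mul_pow_of_pow_eq_one
    (ω := Complex.exp (2 * π * Complex.I / n) ^ k)
    (by rw [pow_right_comm, hζ.pow_eq_one, one_pow]) (hζ.pow_ne_one_of_pos_of_lt hk.ne' hkn)
  rw [norm_mul, norm_exp_two_pi_I_div_pow_sub_one, Complex.norm_natCast] at hkey
  set S := ‖∑ j ∈ range n, (j : ℂ) * (Complex.exp (2 * π * Complex.I / n) ^ k) ^ j‖
  have hsq : (2 * |sin (k * π / n)| * S) ^ 2 = (n : ℝ) ^ 2 := by rw [hkey]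
  rw [mul_pow, mul_pow, sq_abs] at hsq
  have hn : (n : ℝ) ≠ 0 := by exact_mod_cast (by omega : n ≠ 0)
  have hsin : sin (k * π / n) ≠ 0 := fun h ↦ hn (by simpa [h, eq_comm] using hsq)
  field_simp
  linarith

lemma sum_range_natCast {K : Type*} [Field K] [CharZero K] (n : ℕ) :
    ∑ j ∈ range n, (j : K) = n * (n - 1) / 2 := by
  induction n with
  | zero => simp
  | succ n ih => rw [sum_range_succ, ih]; push_cast; ring

lemma sum_range_natCast_sq {K : Type*} [Field K] [CharZero K] (n : ℕ) :
    ∑ j ∈ range n, (j : K) ^ 2 = n * (n - 1) * (2 * n - 1) / 6 := by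
  induction n with
  | zero => simp
  | succ n ih => rw [sum_range_succ, ih]; push_cast; ring

theorem sum_Ico_one_div_sin_sq {n : ℕ} (hn : n ≠ 0) :
    ∑ k ∈ Ico 1 n, 1 / sin (k * π / n) ^ 2 = ((n : ℝ) ^ 2 - 1) / 3 := by
  set S : ℕ → ℝ := fun k ↦
    ‖∑ j ∈ range n, (j : ℂ) * (Complex.exp (2 * π * Complex.I / n) ^ k) ^ j‖ with hS
  have hparseval : ∑ k ∈ range n, S k ^ 2 = n * ∑ j ∈ range n, (j : ℝ) ^ 2 := by
    simpa using (Complex.isPrimitiveRoot_exp n hn).sum_norm_sq_sum_mul_pow (fun j ↦ (j : ℂ))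
  have hS0 : S 0 = ∑ j ∈ range n, (j : ℝ) := by
    simp only [hS, pow_zero, one_pow, mul_one]
    rw [← Nat.cast_sum, Complex.norm_natCast, Nat.cast_sum]
  rw [sum_range_eq_add_Ico _ (Nat.pos_of_ne_zero hn), hS0] at hparseval
  have hn' : (n : ℝ) ≠ 0 := by exact_mod_cast hn
  calc ∑ k ∈ Ico 1 n, 1 / sin (k * π / n) ^ 2
      = 4 / n ^ 2 * ∑ k ∈ Ico 1 n, S k ^ 2 := by
        rw [mul_sum]
        exact sum_congr rfl fun k hk ↦
          one_div_sin_sq_eq_norm_sq_sum (mem_Ico.mp hk).1 (mem_Ico.mp hk).2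
    _ = ((n : ℝ) ^ 2 - 1) / 3 := by
        rw [eq_sub_of_add_eq' hparseval, sum_range_natCast, sum_range_natCast_sq]
        field_simp
        ring

lemma sum_Ico_one_two_mul_of_symm {M : Type*} [AddCommMonoid M] (f : ℕ → M) {m : ℕ} (hm : 0 < m)
    (hf : ∀ k ≤ 2 * m, f (2 * m - k) = f k) :
    ∑ k ∈ Ico 1 (2 * m), f k = 2 • ∑ k ∈ Ico 1 m, f k + f m := by
  have hreflect : ∑ k ∈ Ico (m + 1) (2 * m), f k = ∑ k ∈ Ico 1 m, f k := by
    have h := sum_Ico_reflect f 1 (n := 2 * m) (m := m) (by omega)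
    rw [sum_congr rfl fun k hk ↦ hf k (by grind)] at h
    rw [h]
    congr 2; omega
  rw [← sum_Ico_consecutive f (by omega : 1 ≤ m) (by omega : m ≤ 2 * m),
    sum_eq_sum_Ico_succ_bot (by omega : m < 2 * m), hreflect, two_nsmul]
  abel

theorem stmt7 (n : ℕ) (hn : Even n) (hn4 : 4 ≤ n) :
    ∑ k ∈ Finset.Icc 1 (n / 2 - 1),
      1 / (Real.sin ((k : ℝ) * π / n)) ^ 2 = ((n : ℝ) ^ 2 - 4) / 6 := by
  obtain ⟨m, rfl⟩ := hn.two_dvd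
  have hm : 0 < m := by omega
  have hsymm : ∀ k ≤ 2 * m, 1 / sin (((2 * m - k : ℕ) : ℝ) * π / (2 * m : ℕ)) ^ 2
      = 1 / sin (k * π / (2 * m : ℕ)) ^ 2 := fun k hk ↦ by
    rw [show ((2 * m - k : ℕ) : ℝ) * π / (2 * m : ℕ) = π - k * π / (2 * m : ℕ) by
      rw [Nat.cast_sub hk]; field_simp, sin_pi_sub]
  have hmid : 1 / sin (m * π / (2 * m : ℕ)) ^ 2 = 1 := by
    rw [show (m : ℝ) * π / (2 * m : ℕ) = π / 2 by push_cast; field_simp, sin_pi_div_two]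
    norm_num
  have hfull := sum_Ico_one_div_sin_sq (n := 2 * m) (by omega)
  rw [sum_Ico_one_two_mul_of_symm _ hm hsymm, hmid, nsmul_eq_mul] at hfull
  rw [Nat.mul_div_cancel_left m two_pos,
    Icc_sub_one_right_eq_Ico_of_not_isMin (by simpa using hm.ne')]
  push_cast at hfull ⊢
  linarith
end

section
/- For every odd natural number n ≥ 3 and even positive integer j = 2p with gcd(j, n) = 1, ∑_{k=0}^{(n-3)/2} [sin((j+1)(2k+1)π/(2n)) · sin((j-1)(2k+1)π/(2n))] / [sin²((2k+1)π/(2n)) · sin²(p(2k+1)π/n)] = (n² - 1)/3. -/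
/-!
With `x = (2k+1)π/(2n)` the summand is `sin((j+1)x) sin((j-1)x) / (sin² x sin² (jx))
= csc² x - csc² (jx)`, so the sum splits into two half sums of squared cosecants. Both come from
the classical `∑_{m=1}^{n-1} csc² (mπ/n) = (n² - 1)/3`, which is Parseval's identity for the
`n`-th roots of unity: `1/(1 - z) = -(1/n) ∑ i zⁱ` and `|1 - ζᵐ|² = 4 sin² (mπ/n)`.
The odd multiples of `π/(2n)` give the sum for `2n` minus the sum for `n`, that is `n²`; and since
`2p` is invertible mod `n`, `k ↦ p(2k+1)` permutes the residues mod `n`, so the full second sum is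
again `(n² - 1)/3`. Folding the sums over `k < n` by `k ↦ n - 1 - k` halves them, leaving
`(n² - 1)/2 - (n² - 1)/6`.
-/

open Real Finset

lemma sum_range_natCast_mul_two {R : Type*} [CommRing R] (n : ℕ) :
    (∑ i ∈ range n, (i : R)) * 2 = n * (n - 1) := by
  induction n with
  | zero => simp
  | succ n ih => rw [sum_range_succ, add_mul, ih]; push_cast; ring

lemma sum_range_natCast_sq_mul_six {R : Type*} [CommRing R] (n : ℕ) :
    (∑ i ∈ range n, (i : R) ^ 2) * 6 = n * (n - 1) * (2 * n - 1) := by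
  induction n with
  | zero => simp
  | succ n ih => rw [sum_range_succ, add_mul, ih]; push_cast; ring

section RootsOfUnity

variable {K : Type*} [Field K]

lemma sub_one_mul_sum_range_natCast_mul_pow (z : K) (n : ℕ) :
    (z - 1) * ∑ i ∈ range n, (i : K) * z ^ i = (n - 1) * z ^ n - ∑ i ∈ range n, z ^ i + 1 := by
  induction n with
  | zero => simp
  | succ n ih =>
    rw [sum_range_succ, sum_range_succ, mul_add, ih]
    push_cast
    ring

lemma sum_range_natCast_mul_pow_of_pow_eq_one {z : K} {n : ℕ} (hz : z ^ n = 1) (hz1 : z ≠ 1) :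
    ∑ i ∈ range n, (i : K) * z ^ i = n / (z - 1) := by
  have key := sub_one_mul_sum_range_natCast_mul_pow z n
  rw [hz, geom_sum_eq hz1, hz, sub_self, zero_div] at key
  rw [eq_div_iff (sub_ne_zero.mpr hz1), mul_comm, key]
  ring

lemma one_div_one_sub_mul_one_sub_inv_of_pow_eq_one {z : K} {n : ℕ} (hz : z ^ n = 1)
    (hz1 : z ≠ 1) (hn : (n : K) ≠ 0) :
    1 / ((1 - z) * (1 - z⁻¹)) =
      (∑ i ∈ range n, (i : K) * z ^ i) * (∑ a ∈ range n, (a : K) * z⁻¹ ^ a) / n ^ 2 := by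
  rw [sum_range_natCast_mul_pow_of_pow_eq_one hz hz1,
    sum_range_natCast_mul_pow_of_pow_eq_one (by rw [inv_pow, hz, inv_one]) (inv_ne_one.mpr hz1),
    div_mul_div_comm, show (z - 1) * (z⁻¹ - 1) = (1 - z) * (1 - z⁻¹) by ring, ← sq,
    div_right_comm, div_self (pow_ne_zero 2 hn)]

theorem IsPrimitiveRoot.sum_range_pow_mul_inv_pow {ζ : K} {n i a : ℕ} (hζ : IsPrimitiveRoot ζ n)
    (hi : i < n) (ha : a < n) :
    ∑ m ∈ range n, (ζ ^ m) ^ i * (ζ ^ m)⁻¹ ^ a = if i = a then (n : K) else 0 := by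
  have hζ0 : ζ ≠ 0 := hζ.ne_zero (by omega)
  have hterm (m : ℕ) : (ζ ^ m) ^ i * (ζ ^ m)⁻¹ ^ a = (ζ ^ i / ζ ^ a) ^ m := by ring
  simp only [hterm]
  split_ifs with hia
  · subst hia
    simp [hζ0]
  · have hne : ζ ^ i / ζ ^ a ≠ 1 := fun h =>
      hia (hζ.pow_inj hi ha ((div_eq_one_iff_eq (pow_ne_zero _ hζ0)).mp h))
    rw [geom_sum_eq hne, div_pow, ← pow_mul, ← pow_mul, mul_comm i, mul_comm a, pow_mul, pow_mul,
      hζ.pow_eq_one, one_pow, one_pow, div_one, sub_self, zero_div]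

/-- Parseval's identity for the discrete Fourier transform of `c` on the `n`-th roots of unity. -/
theorem IsPrimitiveRoot.sum_range_mul_sum_range_inv {ζ : K} {n : ℕ} (hζ : IsPrimitiveRoot ζ n)
    (c : ℕ → K) :
    ∑ m ∈ range n, (∑ i ∈ range n, c i * (ζ ^ m) ^ i) * ∑ a ∈ range n, c a * (ζ ^ m)⁻¹ ^ a =
      n * ∑ i ∈ range n, c i ^ 2 := by
  calc _ = ∑ i ∈ range n, ∑ a ∈ range n,
        c i * c a * ∑ m ∈ range n, (ζ ^ m) ^ i * (ζ ^ m)⁻¹ ^ a := by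
        simp_rw [sum_mul_sum, mul_sum]
        rw [sum_comm]
        refine sum_congr rfl fun i _ => ?_
        rw [sum_comm]
        refine sum_congr rfl fun a _ => sum_congr rfl fun m _ => ?_
        ring
    _ = ∑ i ∈ range n, ∑ a ∈ range n, c i * c a * if i = a then (n : K) else 0 := by
        refine sum_congr rfl fun i hi => sum_congr rfl fun a ha => ?_
        rw [hζ.sum_range_pow_mul_inv_pow (mem_range.mp hi) (mem_range.mp ha)]
    _ = _ := by
        simp only [mul_ite, mul_zero, sum_ite_eq, mem_range, mul_sum]
        refine sum_congr rfl fun i hi => ?_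
        rw [if_pos (mem_range.mp hi)]
        ring

theorem IsPrimitiveRoot.sum_Ico_one_div_one_sub_pow_mul_one_sub_inv_pow [CharZero K] {ζ : K}
    {n : ℕ} (hζ : IsPrimitiveRoot ζ n) (hn : n ≠ 0) :
    ∑ m ∈ Ico 1 n, 1 / ((1 - ζ ^ m) * (1 - (ζ ^ m)⁻¹)) = ((n : K) ^ 2 - 1) / 12 := by
  have hnK : (n : K) ≠ 0 := Nat.cast_ne_zero.mpr hn
  have hterm : ∀ m ∈ Ico 1 n, 1 / ((1 - ζ ^ m) * (1 - (ζ ^ m)⁻¹)) =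
      (∑ i ∈ range n, (i : K) * (ζ ^ m) ^ i) * (∑ a ∈ range n, (a : K) * (ζ ^ m)⁻¹ ^ a) /
        n ^ 2 := fun m hm =>
    one_div_one_sub_mul_one_sub_inv_of_pow_eq_one
      (by rw [← pow_mul, mul_comm, pow_mul, hζ.pow_eq_one, one_pow])
      (hζ.pow_ne_one_of_pos_of_lt (Nat.one_le_iff_ne_zero.mp (mem_Ico.mp hm).1)
        (mem_Ico.mp hm).2) hnK
  have hparseval := hζ.sum_range_mul_sum_range_inv (fun i => (i : K))
  rw [sum_range_eq_add_Ico _ (Nat.pos_of_ne_zero hn)] at hparseval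
  simp only [pow_zero, inv_one, one_pow, mul_one] at hparseval
  have hsum := sum_range_natCast_mul_two (R := K) n
  have hsumsq := sum_range_natCast_sq_mul_six (R := K) n
  rw [sum_congr rfl hterm, ← sum_div, div_eq_iff (pow_ne_zero 2 hnK)]
  linear_combination hparseval + n / 6 * hsumsq -
    (∑ i ∈ range n, (i : K) + n * (n - 1) / 2) / 2 * hsum

end RootsOfUnity

lemma one_sub_exp_mul_I_mul_one_sub_inv (t : ℝ) :
    (1 - Complex.exp (t * Complex.I)) * (1 - (Complex.exp (t * Complex.I))⁻¹) =
      ((4 * sin (t / 2) ^ 2 : ℝ) : ℂ) := by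
  have hcos :
      2 * Complex.cos t = Complex.exp (t * Complex.I) + (Complex.exp (t * Complex.I))⁻¹ := by
    rw [← Complex.exp_neg, Complex.cos, neg_mul]
    ring
  have hsin : 4 * sin (t / 2) ^ 2 = 2 - 2 * cos t := by
    rw [sin_sq_eq_half_sub, mul_div_cancel₀ t two_ne_zero]
    ring
  rw [hsin]
  push_cast
  linear_combination hcos + mul_inv_cancel₀ (Complex.exp_ne_zero (t * Complex.I))

/-- The `m = 0` term is `1 / 0 = 0`, so this is `∑_{m=1}^{n-1} csc² (mπ/n) = (n² - 1)/3`. -/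
theorem sum_range_one_div_sin_sq_mul_pi_div (n : ℕ) (hn : n ≠ 0) :
    ∑ m ∈ range n, 1 / sin (m * π / n) ^ 2 = ((n : ℝ) ^ 2 - 1) / 3 := by
  have hζ := Complex.isPrimitiveRoot_exp n hn
  have hterm : ∀ m ∈ Ico 1 n, ((1 / sin (m * π / n) ^ 2 : ℝ) : ℂ) =
      4 * (1 / ((1 - Complex.exp (2 * π * Complex.I / n) ^ m) *
        (1 - (Complex.exp (2 * π * Complex.I / n) ^ m)⁻¹))) := by
    intro m _
    rw [← Complex.exp_nat_mul, show (m : ℂ) * (2 * π * Complex.I / n) =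
      ((2 * (m * π / n) : ℝ) : ℂ) * Complex.I by push_cast; ring,
      one_sub_exp_mul_I_mul_one_sub_inv, mul_div_cancel_left₀ _ two_ne_zero]
    push_cast
    ring
  apply Complex.ofReal_injective
  rw [sum_range_eq_add_Ico _ (Nat.pos_of_ne_zero hn), Complex.ofReal_add, Complex.ofReal_sum,
    sum_congr rfl hterm, ← mul_sum, hζ.sum_Ico_one_div_one_sub_pow_mul_one_sub_inv_pow hn]
  simp
  ring

lemma sum_range_two_mul {M : Type*} [AddCommMonoid M] (f : ℕ → M) (n : ℕ) :
    ∑ m ∈ range (2 * n), f m = ∑ k ∈ range n, f (2 * k) + ∑ k ∈ range n, f (2 * k + 1) := by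
  induction n with
  | zero => simp
  | succ n ih =>
    rw [mul_add, mul_one, sum_range_succ, sum_range_succ, ih, sum_range_succ, sum_range_succ]
    abel

lemma sum_range_two_mul_add_one_of_symm {M : Type*} [AddCommMonoid M] (g : ℕ → M) (h : ℕ)
    (hg : ∀ k ≤ 2 * h, g (2 * h - k) = g k) :
    ∑ k ∈ range (2 * h + 1), g k = 2 • ∑ k ∈ range h, g k + g h := by
  have hupper : ∀ k ∈ range h, g (h + 1 + k) = g (h - 1 - k) := fun k hk => by
    have hk := mem_range.mp hk
    rw [← hg (h + 1 + k) (by omega), show 2 * h - (h + 1 + k) = h - 1 - k by omega]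
  rw [show 2 * h + 1 = h + 1 + h by ring, sum_range_add, sum_range_succ, sum_congr rfl hupper,
    sum_range_reflect g h, two_nsmul]
  abel

theorem sum_range_comp_mul_add_mod {M : Type*} [AddCommMonoid M] (f : ℕ → M) {n a : ℕ} (b : ℕ)
    (ha : a.Coprime n) :
    ∑ k ∈ range n, f ((a * k + b) % n) = ∑ k ∈ range n, f k := by
  have hmaps : Set.MapsTo (fun k => (a * k + b) % n) (range n) (range n) := fun k hk =>
    mem_range.mpr (Nat.mod_lt _ (Nat.zero_lt_of_lt (mem_range.mp hk)))
  have hinj : Set.InjOn (fun k => (a * k + b) % n) (range n) := fun x hx y hy hxy => by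
    have hmod : x ≡ y [MOD n] :=
      Nat.ModEq.cancel_left_of_coprime ha.symm (Nat.ModEq.add_right_cancel' b hxy)
    rwa [Nat.ModEq, Nat.mod_eq_of_lt (mem_range.mp hx), Nat.mod_eq_of_lt (mem_range.mp hy)]
      at hmod
  exact sum_nbij _ hmaps hinj (surjOn_of_injOn_of_card_le _ hmaps hinj le_rfl) fun _ _ => rfl

lemma sin_sq_mod_mul_pi_div (m n : ℕ) : sin ((m % n : ℕ) * π / n) ^ 2 = sin (m * π / n) ^ 2 := by
  rcases eq_or_ne n 0 with rfl | hn
  · simp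
  have harg : (m : ℝ) * π / n = (m % n : ℕ) * π / n + (m / n : ℕ) * π := by
    have hm : (m : ℝ) = (m % n : ℕ) + n * (m / n : ℕ) := by
      exact_mod_cast (Nat.mod_add_div m n).symm
    rw [hm]
    field_simp
  rw [harg, sin_add_nat_mul_pi, mul_pow, ← pow_mul, pow_mul', neg_one_sq, one_pow, one_mul]

lemma sin_nat_mul_pi_div_ne_zero {m n : ℕ} (hn : n ≠ 0) (hmn : ¬ n ∣ m) :
    sin (m * π / n) ≠ 0 := by
  intro hsin
  obtain ⟨z, hz⟩ := sin_eq_zero_iff.mp hsin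
  rw [eq_div_iff (Nat.cast_ne_zero.mpr hn), mul_right_comm] at hz
  have hm : (m : ℤ) = n * z := by
    exact_mod_cast (by linarith [mul_right_cancel₀ pi_ne_zero hz] : (m : ℝ) = n * z)
  exact hmn (Int.natCast_dvd_natCast.mp ⟨z, hm⟩)

theorem sum_range_one_div_sin_sq_odd_mul_pi_div (n : ℕ) (hn : n ≠ 0) :
    ∑ k ∈ range n, 1 / sin ((2 * k + 1) * π / (2 * n)) ^ 2 = (n : ℝ) ^ 2 := by
  have h2n := sum_range_one_div_sin_sq_mul_pi_div (2 * n) (by omega)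
  rw [sum_range_two_mul] at h2n
  have heven : ∑ k ∈ range n, 1 / sin (((2 * k : ℕ) : ℝ) * π / ((2 * n : ℕ) : ℝ)) ^ 2 =
      ((n : ℝ) ^ 2 - 1) / 3 := by
    rw [← sum_range_one_div_sin_sq_mul_pi_div n hn]
    refine sum_congr rfl fun k _ => ?_
    push_cast
    rw [mul_assoc, mul_div_mul_left _ _ two_ne_zero]
  rw [heven] at h2n
  push_cast at h2n
  linear_combination h2n

theorem sum_range_one_div_sin_sq_odd_mul_pi_div_two_mul_add_one (h : ℕ) :
    ∑ k ∈ range h, 1 / sin ((2 * k + 1) * π / (2 * (2 * h + 1))) ^ 2 =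
      ((2 * h + 1 : ℝ) ^ 2 - 1) / 2 := by
  have hsymm : ∀ k ≤ 2 * h,
      1 / sin ((2 * ((2 * h - k : ℕ) : ℝ) + 1) * π / (2 * (2 * h + 1))) ^ 2 =
        1 / sin ((2 * k + 1) * π / (2 * (2 * h + 1))) ^ 2 := fun k hk => by
    rw [Nat.cast_sub hk, ← sin_pi_sub]
    congr 3
    field_simp
    push_cast
    ring
  have hhalf := sum_range_two_mul_add_one_of_symm
    (fun k : ℕ => 1 / sin ((2 * (k : ℝ) + 1) * π / (2 * (2 * h + 1))) ^ 2) h hsymm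
  have hfull := sum_range_one_div_sin_sq_odd_mul_pi_div (2 * h + 1) (by omega)
  push_cast at hfull
  have hmid : sin ((2 * (h : ℝ) + 1) * π / (2 * (2 * h + 1))) = 1 := by
    rw [show (2 * (h : ℝ) + 1) * π / (2 * (2 * h + 1)) = π / 2 by field_simp, sin_pi_div_two]
  rw [hfull, hmid, nsmul_eq_mul] at hhalf
  linear_combination -hhalf / 2

theorem sum_range_one_div_sin_sq_mul_odd_mul_pi_div_of_coprime {n p : ℕ} (hn : n ≠ 0)
    (hp : (2 * p).Coprime n) :
    ∑ k ∈ range n, 1 / sin (p * (2 * k + 1) * π / n) ^ 2 = ((n : ℝ) ^ 2 - 1) / 3 := by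
  rw [← sum_range_one_div_sin_sq_mul_pi_div n hn,
    ← sum_range_comp_mul_add_mod (fun m : ℕ => 1 / sin (m * π / n) ^ 2) p hp]
  refine sum_congr rfl fun k _ => ?_
  rw [sin_sq_mod_mul_pi_div]
  push_cast
  ring_nf

/-- The middle term `k = h` is `1 / sin² (pπ) = 1 / 0 = 0`. -/
theorem sum_range_one_div_sin_sq_mul_odd_mul_pi_div_two_mul_add_one {h p : ℕ}
    (hp : (2 * p).Coprime (2 * h + 1)) :
    ∑ k ∈ range h, 1 / sin (p * (2 * k + 1) * π / (2 * h + 1)) ^ 2 =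
      ((2 * h + 1 : ℝ) ^ 2 - 1) / 6 := by
  have hsymm : ∀ k ≤ 2 * h,
      1 / sin (p * (2 * ((2 * h - k : ℕ) : ℝ) + 1) * π / (2 * h + 1)) ^ 2 =
        1 / sin (p * (2 * k + 1) * π / (2 * h + 1)) ^ 2 := fun k hk => by
    have harg : p * (2 * ((2 * h - k : ℕ) : ℝ) + 1) * π / (2 * h + 1) =
        (2 * p : ℕ) * π - p * (2 * k + 1) * π / (2 * h + 1) := by
      rw [Nat.cast_sub hk]
      field_simp
      push_cast
      ring
    rw [harg, sin_nat_mul_pi_sub, neg_sq, mul_pow, ← pow_mul, pow_mul', neg_one_sq, one_pow,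
      one_mul]
  have hhalf := sum_range_two_mul_add_one_of_symm
    (fun k : ℕ => 1 / sin (p * (2 * (k : ℝ) + 1) * π / (2 * h + 1)) ^ 2) h hsymm
  have hfull := sum_range_one_div_sin_sq_mul_odd_mul_pi_div_of_coprime (by omega) hp
  push_cast at hfull
  have hmid : sin (p * (2 * (h : ℝ) + 1) * π / (2 * h + 1)) = 0 := by
    rw [show p * (2 * (h : ℝ) + 1) * π / (2 * h + 1) = p * π by field_simp, sin_nat_mul_pi]
  rw [hfull, hmid, nsmul_eq_mul] at hhalf
  linear_combination -hhalf / 2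

lemma sin_add_mul_sin_sub (a b : ℝ) : sin (a + b) * sin (a - b) = sin a ^ 2 - sin b ^ 2 := by
  rw [sin_add, sin_sub]
  linear_combination sin a ^ 2 * sin_sq_add_cos_sq b - sin b ^ 2 * sin_sq_add_cos_sq a

lemma sin_add_mul_sin_sub_div_sin_sq_mul_sin_sq {a b : ℝ} (ha : sin a ≠ 0) (hb : sin b ≠ 0) :
    sin (a + b) * sin (a - b) / (sin b ^ 2 * sin a ^ 2) = 1 / sin b ^ 2 - 1 / sin a ^ 2 := by
  rw [sin_add_mul_sin_sub]
  field_simp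

theorem stmt14_general (n : ℕ) (hn : Odd n) (hn3 : 3 ≤ n) (p : ℕ) (j : ℕ)
    (hj : j = 2 * p) (hgcd : Nat.gcd j n = 1) :
    ∑ k ∈ Finset.range ((n - 3) / 2 + 1),
      Real.sin (((j : ℝ) + 1) * (2 * k + 1) * π / (2 * n)) *
        Real.sin (((j : ℝ) - 1) * (2 * k + 1) * π / (2 * n)) /
        ((Real.sin ((2 * (k : ℝ) + 1) * π / (2 * n))) ^ 2 *
          (Real.sin ((p : ℝ) * (2 * k + 1) * π / n)) ^ 2) =
    ((n : ℝ) ^ 2 - 1) / 3 := by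
  subst hj
  obtain ⟨h, rfl⟩ := hn
  rw [show (2 * h + 1 - 3) / 2 + 1 = h by omega]
  push_cast
  calc _ = ∑ k ∈ range h, (1 / sin ((2 * k + 1) * π / (2 * (2 * h + 1))) ^ 2 -
          1 / sin (p * (2 * k + 1) * π / (2 * h + 1)) ^ 2) := sum_congr rfl fun k hk => ?_
    _ = _ := by
      rw [sum_sub_distrib, sum_range_one_div_sin_sq_odd_mul_pi_div_two_mul_add_one,
        sum_range_one_div_sin_sq_mul_odd_mul_pi_div_two_mul_add_one hgcd]
      ring
  have hk : k < h := mem_range.mp hk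
  have hb := sin_nat_mul_pi_div_ne_zero (m := 2 * k + 1) (n := 2 * (2 * h + 1)) (by omega)
    fun hdvd => by have := Nat.le_of_dvd (by omega) hdvd; omega
  have ha := sin_nat_mul_pi_div_ne_zero (m := p * (2 * k + 1)) (n := 2 * h + 1) (by omega)
    fun hdvd => by
      have := Nat.le_of_dvd (by omega)
        ((Nat.Coprime.coprime_dvd_left (dvd_mul_left p 2) hgcd).symm.dvd_of_dvd_mul_left hdvd)
      omega
  push_cast at ha hb
  convert sin_add_mul_sin_sub_div_sin_sq_mul_sin_sq ha hb using 3 <;> (congr 1; field_simp)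

theorem stmt14 (n : ℕ) (hn : Odd n) (hn3 : 3 ≤ n) (p : ℕ) (hp : 1 ≤ p) (j : ℕ)
    (hj : j = 2 * p) (hgcd : Nat.gcd j n = 1) :
    ∑ k ∈ Finset.range ((n - 3) / 2 + 1),
      Real.sin (((j : ℝ) + 1) * (2 * k + 1) * π / (2 * n)) *
        Real.sin (((j : ℝ) - 1) * (2 * k + 1) * π / (2 * n)) /
        ((Real.sin ((2 * (k : ℝ) + 1) * π / (2 * n))) ^ 2 *
          (Real.sin ((p : ℝ) * (2 * k + 1) * π / n)) ^ 2) =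
    ((n : ℝ) ^ 2 - 1) / 3 :=
  stmt14_general n hn hn3 p j hj hgcd
end

section
/- For every positive integer k, ∑_{j=0}^{2k} (-1)^j sin²((2j+1)π/(8k+6)) = 1/2 − cos²((2k+1)π/(4k+3)) / (2 cos(π/(4k+3))). -/
/-!
With `θ = π / (4k + 3)` the angles are `(2j + 1)θ / 2`, so `sin² = (1 - cos ((2j + 1)θ)) / 2`
turns the sum into `1/2 - (1/2) ∑ (-1)^j cos ((2j + 1)θ)`. Multiplying by `2 cos θ` makes the
cosine sum telescope, since `2 cos θ cos ((2j + 1)θ) = cos (2jθ) + cos (2(j + 1)θ)`; for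
`2k + 1` terms it leaves `1 + cos (2(2k + 1)θ) = 2 cos² ((2k + 1)θ)`.
-/

open Real Finset

theorem two_mul_cos_mul_alternating_sum_cos_odd_mul (θ : ℝ) (n : ℕ) :
    2 * cos θ * ∑ j ∈ range n, (-1 : ℝ) ^ j * cos ((2 * j + 1) * θ) =
      1 - (-1 : ℝ) ^ n * cos (2 * n * θ) := by
  induction n with
  | zero => simp
  | succ n ih =>
    have h_succ : cos (2 * (n + 1 : ℕ) * θ) =
        cos ((2 * n + 1) * θ) * cos θ - sin ((2 * n + 1) * θ) * sin θ := by
      rw [← cos_add]; push_cast; ring_nf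
    have h_self : cos (2 * n * θ) =
        cos ((2 * n + 1) * θ) * cos θ + sin ((2 * n + 1) * θ) * sin θ := by
      rw [← cos_sub]; ring_nf
    rw [sum_range_succ, mul_add, ih, h_succ, pow_succ]
    linear_combination (-(-1 : ℝ) ^ n) * h_self

theorem two_mul_cos_mul_alternating_sum_cos_odd_mul_range_two_mul_add_one (θ : ℝ) (k : ℕ) :
    2 * cos θ * ∑ j ∈ range (2 * k + 1), (-1 : ℝ) ^ j * cos ((2 * j + 1) * θ) =
      2 * cos ((2 * k + 1) * θ) ^ 2 := by
  rw [two_mul_cos_mul_alternating_sum_cos_odd_mul, (odd_two_mul_add_one k).neg_one_pow,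
    cos_sq]
  push_cast
  ring_nf

theorem sum_range_two_mul_add_one_neg_one_pow (k : ℕ) :
    ∑ j ∈ range (2 * k + 1), (-1 : ℝ) ^ j = 1 := by
  rw [geom_sum_eq (by norm_num), (odd_two_mul_add_one k).neg_one_pow]
  norm_num

theorem alternating_sum_sin_sq_odd_mul_half {θ : ℝ} (hθ : cos θ ≠ 0) (k : ℕ) :
    ∑ j ∈ range (2 * k + 1), (-1 : ℝ) ^ j * sin ((2 * j + 1) * θ / 2) ^ 2 =
      1 / 2 - cos ((2 * k + 1) * θ) ^ 2 / (2 * cos θ) := by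
  have h_cos_sum := two_mul_cos_mul_alternating_sum_cos_odd_mul_range_two_mul_add_one θ k
  have h_summand (j : ℕ) : (-1 : ℝ) ^ j * sin ((2 * j + 1) * θ / 2) ^ 2 =
      (-1 : ℝ) ^ j / 2 - (-1 : ℝ) ^ j * cos ((2 * j + 1) * θ) / 2 := by
    rw [sin_sq_eq_half_sub, mul_div_cancel₀ _ two_ne_zero]; ring
  have h_cos_sum' : ∑ j ∈ range (2 * k + 1), (-1 : ℝ) ^ j * cos ((2 * j + 1) * θ) =
      cos ((2 * k + 1) * θ) ^ 2 / cos θ := by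
    rw [eq_div_iff hθ]
    linear_combination h_cos_sum / 2
  simp only [h_summand, sum_sub_distrib, ← sum_div, sum_range_two_mul_add_one_neg_one_pow, h_cos_sum']
  ring

theorem stmt17_general (k : ℕ) :
    ∑ j ∈ Finset.range (2 * k + 1),
      (-1 : ℝ) ^ j * (Real.sin ((2 * (j : ℝ) + 1) * π / (8 * k + 6))) ^ 2 =
    1 / 2 - (Real.cos ((2 * (k : ℝ) + 1) * π / (4 * k + 3))) ^ 2 /
      (2 * Real.cos (π / (4 * k + 3))) := by
  set θ : ℝ := π / (4 * k + 3) with hθ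
  have h_denom : (0 : ℝ) < 4 * k + 3 := by positivity
  have h_cos : cos θ ≠ 0 := by
    refine (cos_pos_of_mem_Ioo ⟨by linarith [pi_pos, show 0 < θ by positivity], ?_⟩).ne'
    rw [div_lt_div_iff₀ h_denom two_pos]
    nlinarith [pi_pos]
  have h_angle (j : ℕ) : (2 * (j : ℝ) + 1) * π / (8 * k + 6) = (2 * j + 1) * θ / 2 := by
    rw [hθ]; field_simp; ring
  have h_angle_k : (2 * (k : ℝ) + 1) * π / (4 * k + 3) = (2 * k + 1) * θ := by
    rw [hθ, mul_div_assoc]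
  simp only [h_angle, h_angle_k]
  exact alternating_sum_sin_sq_odd_mul_half h_cos k

theorem stmt17 (k : ℕ) (hk : 1 ≤ k) :
    ∑ j ∈ Finset.range (2 * k + 1),
      (-1 : ℝ) ^ j * (Real.sin ((2 * (j : ℝ) + 1) * π / (8 * k + 6))) ^ 2 =
    1 / 2 - (Real.cos ((2 * (k : ℝ) + 1) * π / (4 * k + 3))) ^ 2 /
      (2 * Real.cos (π / (4 * k + 3))) :=
  stmt17_general k
end
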